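/- Let k be a commutative ring, A an associative unital k-algebra, and Δ: A → A⊗A a coassociative k-linear map (Sweedler notation Δ(a) = Σ a₁⊗a₂) satisfying the weak Frobenius condition Δ(ab) = Σ a₁b⊗a₂ = Σ b₁⊗ab₂ for all a,b ∈ A. Write Δ(1_A) = Σ f¹⊗f². Then for every left A-module M, the k-linear map ρ: M → M⊗A defined by ρ(m) = Σ f¹·m ⊗ f² is a coassociative coaction, i.e. (ρ⊗I_A)∘ρ = (I_M⊗Δ)∘ρ, and the FS-object compatibility condition holds: ρ(a·m) = Σ a₁·m⊗a₂ = Σ m₀⊗a·m₁ for all a ∈ A, m ∈ M (where ρ(m) = Σ m₀⊗m₁). Hence every left A-module is an FS-object over A in a canonical way, and the forgetful functor from FS-objects to left A-modules is an isomorphism of categories. -/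
import Mathlib


open TensorProduct

variable {k A : Type*} [CommRing k] [Ring A] [Algebra k A]

/-- The action map `A ⊗ M → M`, `a ⊗ m ↦ a • m`. -/
noncomputable def actHom (M : Type*) [AddCommGroup M] [Module k M] [Module A M]
    [IsScalarTower k A M] [SMulCommClass A k M] : A ⊗[k] M →ₗ[k] M :=
  TensorProduct.lift (Algebra.lsmul k k M : A →ₐ[k] Module.End k M).toLinearMap

/-- The map `(A ⊗ A) ⊗ M → M ⊗ A` sending `(a₁ ⊗ a₂) ⊗ m` to `(a₁ • m) ⊗ a₂`. -/
noncomputable def sweedlerAct (M : Type*) [AddCommGroup M] [Module k M] [Module A M]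
    [IsScalarTower k A M] [SMulCommClass A k M] :
    (A ⊗[k] A) ⊗[k] M →ₗ[k] M ⊗[k] A :=
  (TensorProduct.comm k A M).toLinearMap ∘ₗ
    (TensorProduct.map LinearMap.id (actHom M)) ∘ₗ
    (TensorProduct.leftComm k A A M).toLinearMap ∘ₗ
    (TensorProduct.assoc k A A M).toLinearMap

lemma sweedlerAct_tmul {k A : Type*} [CommRing k] [Ring A] [Algebra k A]
    (M : Type*) [AddCommGroup M] [Module k M] [Module A M]
    [IsScalarTower k A M] [SMulCommClass A k M] (x y : A) (m : M) :
    sweedlerAct M ((x ⊗ₜ[k] y) ⊗ₜ[k] m) = (x • m) ⊗ₜ[k] y := by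
  simp [sweedlerAct, actHom]

/-- Let `Δ` be a weak Frobenius comultiplication on a unital algebra `A` and write
`Δ(1) = Σ f¹ ⊗ f²`.  Then for every left `A`-module `M` the map
`ρ(m) = Σ f¹·m ⊗ f²` is a coassociative coaction and satisfies the FS-object
compatibility `ρ(a·m) = Σ a₁·m ⊗ a₂ = Σ m₀ ⊗ a·m₁`; hence every left `A`-module
is canonically an FS-object over `A`. -/
theorem module_over_WF_algebra_is_FS_object
    (Δ : A →ₗ[k] A ⊗[k] A)
    (hcoassoc : (TensorProduct.assoc k A A A).toLinearMap ∘ₗ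
        (TensorProduct.map Δ LinearMap.id) ∘ₗ Δ =
      (TensorProduct.map LinearMap.id Δ) ∘ₗ Δ)
    (hWF1 : ∀ a b : A, Δ (a * b) = Δ a * (b ⊗ₜ[k] (1 : A)))
    (hWF2 : ∀ a b : A, Δ (a * b) = ((1 : A) ⊗ₜ[k] a) * Δ b)
    (M : Type*) [AddCommGroup M] [Module k M] [Module A M]
    [IsScalarTower k A M] [SMulCommClass A k M] :
    ∀ ρ : M →ₗ[k] M ⊗[k] A,
      ρ = sweedlerAct M ∘ₗ (TensorProduct.mk k (A ⊗[k] A) M (Δ 1)) →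
      ((TensorProduct.assoc k M A A).toLinearMap ∘ₗ
          (TensorProduct.map ρ LinearMap.id) ∘ₗ ρ =
        (TensorProduct.map LinearMap.id Δ) ∘ₗ ρ) ∧
      (∀ (a : A) (m : M),
        ρ (a • m) = sweedlerAct M ((Δ a) ⊗ₜ[k] m) ∧
        ρ (a • m) =
          (TensorProduct.map LinearMap.id (LinearMap.mulLeft k a)) (ρ m)) := by
  intro ρ hρ
  -- elementwise formula for ρ
  have hρ' : ∀ m : M, ρ m = sweedlerAct M ((Δ 1) ⊗ₜ[k] m) := by
    intro m; rw [hρ]; rfl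
  -- auxiliary : right multiplication lemma
  have key1 : ∀ (a : A) (m : M) (t : A ⊗[k] A),
      sweedlerAct M ((t * (a ⊗ₜ[k] (1 : A))) ⊗ₜ[k] m)
        = sweedlerAct M (t ⊗ₜ[k] (a • m)) := by
    intro a m t
    induction t using TensorProduct.induction_on with
    | zero => simp
    | tmul x y =>
        simp [Algebra.TensorProduct.tmul_mul_tmul, sweedlerAct_tmul, mul_smul]
    | add s t hs ht =>
        simp only [add_mul, TensorProduct.add_tmul, map_add, hs, ht]
  have key2 : ∀ (a : A) (m : M) (t : A ⊗[k] A),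
      sweedlerAct M ((((1 : A) ⊗ₜ[k] a) * t) ⊗ₜ[k] m)
        = (TensorProduct.map LinearMap.id (LinearMap.mulLeft k a))
            (sweedlerAct M (t ⊗ₜ[k] m)) := by
    intro a m t
    induction t using TensorProduct.induction_on with
    | zero => simp
    | tmul x y =>
        simp [Algebra.TensorProduct.tmul_mul_tmul, sweedlerAct_tmul]
    | add s t hs ht =>
        simp only [mul_add, TensorProduct.add_tmul, map_add, hs, ht]
  -- FS compatibility, first form
  have h2a : ∀ (a : A) (m : M), ρ (a • m) = sweedlerAct M ((Δ a) ⊗ₜ[k] m) := by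
    intro a m
    have hΔa : Δ a = Δ 1 * (a ⊗ₜ[k] (1 : A)) := by simpa using hWF1 1 a
    rw [hρ' (a • m), hΔa, key1]
  -- FS compatibility, second form
  have h2b : ∀ (a : A) (m : M), ρ (a • m) =
      (TensorProduct.map LinearMap.id (LinearMap.mulLeft k a)) (ρ m) := by
    intro a m
    have hΔa : Δ a = ((1 : A) ⊗ₜ[k] a) * Δ 1 := by simpa using hWF2 a 1
    rw [h2a a m, hΔa, key2, hρ' m]
  refine ⟨?_, fun a m => ⟨h2a a m, h2b a m⟩⟩
  -- coassociativity
  ext m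
  simp only [LinearMap.comp_apply, LinearEquiv.coe_coe]
  -- the map x ⊗ w ↦ (x • m) ⊗ w
  set Ψ : A ⊗[k] (A ⊗[k] A) →ₗ[k] M ⊗[k] (A ⊗[k] A) :=
    TensorProduct.map ((actHom M) ∘ₗ ((TensorProduct.mk k A M).flip m))
      LinearMap.id with hΨ
  have hkey : (TensorProduct.assoc k A A A)
      ((TensorProduct.map Δ LinearMap.id) (Δ 1))
      = (TensorProduct.map LinearMap.id Δ) (Δ 1) := by
    have := LinearMap.congr_fun hcoassoc 1
    simpa using this
  -- Step 1+2: LHS as Ψ of assoc of (map Δ id) (Δ 1)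
  have hL : ∀ t : A ⊗[k] A,
      (TensorProduct.assoc k M A A)
        ((TensorProduct.map ρ LinearMap.id) (sweedlerAct M (t ⊗ₜ[k] m)))
      = Ψ ((TensorProduct.assoc k A A A)
          ((TensorProduct.map Δ LinearMap.id) t)) := by
    intro t
    induction t using TensorProduct.induction_on with
    | zero => simp
    | tmul x y =>
        rw [show (TensorProduct.map Δ LinearMap.id) (x ⊗ₜ[k] y)
              = (Δ x) ⊗ₜ[k] y from rfl]
        rw [sweedlerAct_tmul]
        rw [show (TensorProduct.map ρ LinearMap.id) ((x • m) ⊗ₜ[k] y)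
              = (ρ (x • m)) ⊗ₜ[k] y from rfl]
        rw [h2a x m]
        induction (Δ x) using TensorProduct.induction_on with
        | zero => simp
        | tmul u v => simp [sweedlerAct_tmul, hΨ, actHom]
        | add s t hs ht =>
            simp only [TensorProduct.add_tmul, map_add, hs, ht]
    | add s t hs ht =>
        simp only [TensorProduct.add_tmul, map_add, hs, ht]
  -- Step 4: RHS as Ψ of (map id Δ) (Δ 1)
  have hR : ∀ t : A ⊗[k] A,
      (TensorProduct.map LinearMap.id Δ) (sweedlerAct M (t ⊗ₜ[k] m))
      = Ψ ((TensorProduct.map LinearMap.id Δ) t) := by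
    intro t
    induction t using TensorProduct.induction_on with
    | zero => simp
    | tmul x y => simp [sweedlerAct_tmul, hΨ, actHom]
    | add s t hs ht =>
        simp only [TensorProduct.add_tmul, map_add, hs, ht]
  rw [hρ' m, hL (Δ 1), hR (Δ 1), hkey]
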